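/- Let p ≥ 1, let Q be a p×p matrix polynomial and P = Σ_{k=0}^{m} A_{m−k} z^k a monic p×p matrix polynomial of degree m ≥ 1 (A_0 = I_p), and suppose R(z) := Q(z)·P(z)⁻¹ admits the Laurent expansion R(z) = Σ_{j=0}^{k} z^j·s_{−(j+1)} + Σ_{j=0}^{∞} s_j·z^{−(j+1)} converging for all sufficiently large |z|. Then for every integer n ≥ 0 one has Σ_{i=0}^{m} s_{n+i}·A_{m−i} = 0_p; equivalently, every block Hankel matrix [s_{j+a+b}]_{a,b} built from (s_i)_{i≥0} annihilates the column (A_m, A_{m−1}, …, A_0)ᵀ of coefficients of P. -/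

import Mathlib

/-!
Write `R = N + S` with `N` the polynomial part of the Laurent expansion and
`S(z) = ∑ s_j z^{-(j+1)}`. Where `P(z)` is invertible, `S(z) P(z) = Q(z) - N(z) P(z)` is a
polynomial in `z`. Expanding `S(z) P(z)` termwise, the coefficient of `z^{-(n+1)}` is
`∑_i s_{n+i} A_{m-i}`, and the finitely many nonnegative powers form another polynomial. Hence
`∑_n (∑_i s_{n+i} A_{m-i}) z^{-(n+1)}` is a polynomial in `z` for large `|z|`; multiplied by a
power of `w = z⁻¹` it becomes an identity of power series in `w`, and uniqueness of power series
coefficients makes every negative-power coefficient vanish.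
-/

open Polynomial Matrix Filter
open scoped ComplexOrder

/-- The space of `p × p` complex matrices. -/
abbrev Mat (p : ℕ) := Matrix (Fin p) (Fin p) ℂ

/-- Evaluation of a matrix polynomial at a complex scalar. -/
noncomputable def mpEval {p : ℕ} (F : Polynomial (Mat p)) (z : ℂ) : Mat p :=
  Polynomial.eval (z • (1 : Mat p)) F

/-- The spectrum (set of zeros) of a matrix polynomial. -/
def mpSpec {p : ℕ} (F : Polynomial (Mat p)) : Set ℂ := {z | (mpEval F z).det = 0}

/-- The scalar polynomial `det F` of a matrix polynomial `F`. -/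
noncomputable def detPoly {p : ℕ} (F : Polynomial (Mat p)) : Polynomial ℂ :=
  (matPolyEquiv.symm F).det

/-- A matrix polynomial is regular if its determinant is not the zero polynomial. -/
def mpRegular {p : ℕ} (F : Polynomial (Mat p)) : Prop := detPoly F ≠ 0

/-- A matrix polynomial is unimodular if its determinant is a nonzero constant. -/
def Unimodular {p : ℕ} (G : Polynomial (Mat p)) : Prop :=
  ∃ c : ℂ, c ≠ 0 ∧ detPoly G = Polynomial.C c

/-- `F` and `G` are right coprime iff every common right divisor is unimodular. -/
def RightCoprime {p : ℕ} (F G : Polynomial (Mat p)) : Prop :=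
  ∀ G₀ : Polynomial (Mat p), (∃ C, F = C * G₀) → (∃ C, G = C * G₀) → Unimodular G₀

/-- The open upper half-plane. -/
def UHP : Set ℂ := {z | 0 < z.im}

/-- A matrix-valued Herglotz–Nevanlinna function: holomorphic on the open upper
half-plane with positive semidefinite imaginary part there. -/
def IsHNMat {p : ℕ} (R : ℂ → Mat p) : Prop :=
  (∀ i j : Fin p, DifferentiableOn ℂ (fun z => R z i j) UHP) ∧
  ∀ z ∈ UHP, ((2 * Complex.I)⁻¹ • (R z - (R z)ᴴ)).PosSemidef

/-- `R(z̄)* = R(z)` for `z` with both `z` and `z̄` outside the set `S`. -/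
def SelfAdjointOff {p : ℕ} (R : ℂ → Mat p) (S : Set ℂ) : Prop :=
  ∀ z : ℂ, z ∉ S → (starRingEnd ℂ) z ∉ S → (R ((starRingEnd ℂ) z))ᴴ = R z

/-- The block Hankel matrix `[s_{a+b}]_{a,b=0}^{m-1}`. -/
def blockHankel {p : ℕ} (s : ℕ → Mat p) (m : ℕ) :
    Matrix (Fin m × Fin p) (Fin m × Fin p) ℂ :=
  Matrix.of fun x y => s ((x.1 : ℕ) + (y.1 : ℕ)) x.2 y.2

/-- `R` admits the Laurent expansion
`R(z) = ∑_{j=0}^{k} z^j • sneg j + ∑_{j=0}^{∞} z^{-(j+1)} • spos j`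
(with `sneg j = s_{-(j+1)}` and `spos j = s_j`), converging for all
sufficiently large `|z|`. -/
def HasLaurentAt {p : ℕ} (R : ℂ → Mat p) (k : ℕ) (sneg spos : ℕ → Mat p) : Prop :=
  ∃ c : ℝ, ∀ z : ℂ, c < ‖z‖ →
    HasSum (fun j : ℕ => (z ^ (j + 1))⁻¹ • spos j)
      (R z - ∑ j ∈ Finset.range (k + 1), z ^ j • sneg j)

/-- A simple matrix polynomial: regular, and at every zero `λ` the multiplicity of
`λ` as a root of `det F` equals the nullity `p - rank F(λ)`. -/
def mpSimple {p : ℕ} (F : Polynomial (Mat p)) : Prop :=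
  mpRegular F ∧ ∀ lam : ℂ, (mpEval F lam).det = 0 →
    (detPoly F).rootMultiplicity lam = p - (mpEval F lam).rank

/-- Hurwitz stability: all zeros lie in the open left half-plane. -/
def HurwitzStable {p : ℕ} (F : Polynomial (Mat p)) : Prop :=
  ∀ z : ℂ, (mpEval F z).det = 0 → z.re < 0

/-- The even part `F_e` of a matrix polynomial, so that `F(z) = F_e(z²) + z F_o(z²)`. -/
noncomputable def evenPart {p : ℕ} (F : Polynomial (Mat p)) : Polynomial (Mat p) :=
  ∑ k ∈ Finset.range (F.natDegree + 1), Polynomial.C (F.coeff (2 * k)) * Polynomial.X ^ k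

/-- The odd part `F_o` of a matrix polynomial, so that `F(z) = F_e(z²) + z F_o(z²)`. -/
noncomputable def oddPart {p : ℕ} (F : Polynomial (Mat p)) : Polynomial (Mat p) :=
  ∑ k ∈ Finset.range (F.natDegree + 1), Polynomial.C (F.coeff (2 * k + 1)) * Polynomial.X ^ k

/-- The coefficientwise conjugate-transposed polynomial `F^∨`. -/
noncomputable def polyConjT {p : ℕ} (F : Polynomial (Mat p)) : Polynomial (Mat p) :=
  ∑ k ∈ Finset.range (F.natDegree + 1), Polynomial.C ((F.coeff k)ᴴ) * Polynomial.X ^ k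

open Topology Finset Bornology

section PowerSeries

variable {E : Type*} [NormedAddCommGroup E] [NormedSpace ℂ E] [CompleteSpace E]

theorem eq_zero_of_eventually_hasSum_pow_smul_zero {g : ℕ → E}
    (h : ∀ᶠ w in 𝓝[≠] (0 : ℂ), HasSum (fun n => w ^ n • g n) 0) : g = 0 := by
  set q : FormalMultilinearSeries ℂ ℂ E :=
    fun n => ContinuousMultilinearMap.mkPiRing ℂ (Fin n) (g n)
  have hq : ∀ n w, (q n fun _ => w) = w ^ n • g n := by
    simp [q, ContinuousMultilinearMap.mkPiRing_apply]
  obtain ⟨w₀, hw₀, hw₀0⟩ := (h.and self_mem_nhdsWithin).exists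
  have hradius : 0 < q.radius := by
    refine lt_of_lt_of_le ?_ (q.le_radius_of_tendsto (r := ‖w₀‖₊) (l := 0) ?_)
    · simpa using hw₀0
    · simpa [q, norm_smul, mul_comm] using hw₀.summable.tendsto_atTop_zero.norm
  have hball := q.hasFPowerSeriesOnBall hradius
  have hzero : ∀ᶠ w in 𝓝[≠] (0 : ℂ), q.sum w = 0 := by
    filter_upwards [h, nhdsWithin_le_nhds (Metric.eball_mem_nhds 0 hradius)] with w hw hwr
    have := hball.hasSum (y := w) (by simpa using hwr)
    rw [zero_add] at this
    exact this.unique (hw.congr_fun fun n => hq n w)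
  have := (hball.hasFPowerSeriesAt.eq_zero_of_eventually
    (hball.analyticAt.frequently_zero_iff_eventually_zero.1 hzero.frequently))
  funext n
  simpa [hq] using congr($this n fun _ => (1 : ℂ))

theorem eq_zero_of_eventually_hasSum_inv_pow_smul_eq_sum {g f : ℕ → E} {D : ℕ}
    (h : ∀ᶠ z in cobounded ℂ,
      HasSum (fun n => (z ^ (n + 1))⁻¹ • g n) (∑ d ∈ range (D + 1), z ^ d • f d)) :
    g = 0 := by
  -- `G` lists the coefficients of the power series `w ^ D • (series - polynomial)` in `w = z⁻¹`.
  set G : ℕ → E := fun t => if t ≤ D then -f (D - t) else g (t - (D + 1))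
  have hG : G = 0 := by
    refine eq_zero_of_eventually_hasSum_pow_smul_zero ?_
    filter_upwards [tendsto_inv₀_nhdsNE_zero.eventually h, self_mem_nhdsWithin] with w hw hw0
    rw [← hasSum_nat_add_iff' (D + 1), zero_sub]
    have hpoly : ∑ t ∈ range (D + 1), w ^ t • G t =
        -(w ^ D • ∑ d ∈ range (D + 1), w⁻¹ ^ d • f d) := by
      rw [smul_sum, ← sum_range_reflect, ← sum_neg_distrib]
      refine sum_congr rfl fun t ht => ?_
      have htD : t ≤ D := Nat.lt_succ_iff.mp (mem_range.mp ht)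
      simp only [G, Nat.add_sub_cancel, if_pos (Nat.sub_le D t), Nat.sub_sub_self htD, smul_neg,
        pow_sub₀ w hw0 htD, inv_pow, smul_smul]
    rw [hpoly, neg_neg]
    convert hw.const_smul (w ^ D) using 2 with n
    simp only [G, if_neg (show ¬ n + (D + 1) ≤ D by omega), Nat.add_sub_cancel, smul_smul,
      inv_pow, inv_inv, ← pow_add]
    congr 2; omega
  funext n
  have := congr_fun hG (n + (D + 1))
  simpa [G, if_neg (show ¬ n + (D + 1) ≤ D by omega)] using this

end PowerSeries

theorem HasSum.inv_pow_smul_nat_add {E : Type*} [AddCommGroup E] [Module ℂ E]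
    [TopologicalSpace E] [IsTopologicalAddGroup E] [ContinuousConstSMul ℂ E]
    {s : ℕ → E} {T : E} {z : ℂ} (hz : z ≠ 0)
    (h : HasSum (fun j => (z ^ (j + 1))⁻¹ • s j) T) (i : ℕ) :
    HasSum (fun n => (z ^ (n + 1))⁻¹ • s (n + i))
      (z ^ i • T - ∑ j ∈ range i, z ^ (i - (j + 1)) • s j) := by
  have htail := ((hasSum_nat_add_iff' i).2 h).const_smul (z ^ i)
  rw [smul_sub, smul_sum] at htail
  convert htail using 1
  · funext n
    rw [smul_smul, add_right_comm, pow_add _ (n + 1), mul_inv, mul_comm (z ^ (n + 1))⁻¹,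
      mul_inv_cancel_left₀ (pow_ne_zero _ hz)]
  · congr 1
    refine sum_congr rfl fun j hj => ?_
    rw [smul_smul, ← div_eq_mul_inv, pow_sub₀ _ hz (by simp at hj; omega), div_eq_mul_inv]

section MatrixPolynomial

variable {p : ℕ}

lemma mpEval_eq_sum (F : Polynomial (Mat p)) (z : ℂ) :
    mpEval F z = ∑ i ∈ range (F.natDegree + 1), z ^ i • F.coeff i := by
  rw [mpEval, eval_eq_sum_range]
  refine sum_congr rfl fun i _ => ?_
  rw [_root_.smul_pow, one_pow, mul_smul_comm, mul_one]

lemma mpEval_mul (F G : Polynomial (Mat p)) (z : ℂ) :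
    mpEval (F * G) z = mpEval F z * mpEval G z :=
  eval₂_mul_noncomm _ _ fun _ => (Commute.one_right _).smul_right z

lemma mpEval_sub (F G : Polynomial (Mat p)) (z : ℂ) :
    mpEval (F - G) z = mpEval F z - mpEval G z :=
  eval_sub _ _ _

lemma mpEval_finsetSum {ι : Type*} (s : Finset ι) (F : ι → Polynomial (Mat p)) (z : ℂ) :
    mpEval (∑ i ∈ s, F i) z = ∑ i ∈ s, mpEval (F i) z :=
  eval_finsetSum _ _ _

lemma mpEval_C_mul_X_pow (a : Mat p) (e : ℕ) (z : ℂ) : mpEval (C a * X ^ e) z = z ^ e • a := by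
  rw [mpEval, C_mul_X_pow_eq_monomial, eval_monomial, _root_.smul_pow, one_pow, mul_smul_comm,
    mul_one]

lemma eventually_isUnit_mpEval {P : Polynomial (Mat p)} (hP : P.Monic) :
    ∀ᶠ z in cobounded ℂ, IsUnit (mpEval P z) := by
  set d := P.natDegree
  have hlim : Tendsto (fun z : ℂ => ∑ i ∈ range (d + 1), z⁻¹ ^ (d - i) • P.coeff i)
      (cobounded ℂ) (𝓝 1) := by
    have hval : ∑ i ∈ range (d + 1), (0 : ℂ) ^ (d - i) • P.coeff i = 1 := by
      rw [sum_range_succ, Nat.sub_self, pow_zero, one_smul, hP.coeff_natDegree,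
        sum_eq_zero fun i hi => by rw [zero_pow (by simp at hi; omega), zero_smul], zero_add]
    rw [← hval]
    exact tendsto_finsetSum _ fun i _ => (tendsto_inv₀_cobounded.pow _).smul_const _
  have hdet : Tendsto (fun z : ℂ => det (∑ i ∈ range (d + 1), z⁻¹ ^ (d - i) • P.coeff i))
      (cobounded ℂ) (𝓝 1) := by
    simpa only [id, det_one, Function.comp_def] using
      (continuous_id.matrix_det.tendsto _).comp hlim
  filter_upwards [hdet.eventually_ne one_ne_zero, eventually_ne_cobounded 0] with z hz hz0
  have hscaled : ∑ i ∈ range (d + 1), z⁻¹ ^ (d - i) • P.coeff i = (z ^ d)⁻¹ • mpEval P z := by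
    rw [mpEval_eq_sum, smul_sum]
    refine sum_congr rfl fun i hi => ?_
    rw [smul_smul, inv_pow, pow_sub₀ _ hz0 (by simp at hi; omega), mul_inv, inv_inv, mul_comm]
  rw [hscaled, det_smul] at hz
  exact (isUnit_iff_isUnit_det _).2 (isUnit_iff_ne_zero.2 (right_ne_zero_of_mul hz))

theorem exists_hasSum_inv_pow_smul_sum_mul_coeff (F : Polynomial (Mat p)) (s : ℕ → Mat p) :
    ∃ W : Polynomial (Mat p), ∀ z : ℂ, z ≠ 0 → ∀ T : Mat p,
      HasSum (fun j => (z ^ (j + 1))⁻¹ • s j) T →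
      HasSum (fun n => (z ^ (n + 1))⁻¹ • ∑ i ∈ range (F.natDegree + 1), s (n + i) * F.coeff i)
        (T * mpEval F z - mpEval W z) := by
  -- the nonnegative powers of `z` that appear when the series of `s` is shifted by `i`
  set W : Polynomial (Mat p) :=
    ∑ i ∈ range (F.natDegree + 1), ∑ j ∈ range i, C (s j * F.coeff i) * X ^ (i - (j + 1))
  refine ⟨W, fun z hz T h => ?_⟩
  have hsum := hasSum_sum fun i (_ : i ∈ range (F.natDegree + 1)) =>
    (h.inv_pow_smul_nat_add hz i).mul_right (F.coeff i)
  have hval : T * mpEval F z - mpEval W z = ∑ i ∈ range (F.natDegree + 1),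
      (z ^ i • T - ∑ j ∈ range i, z ^ (i - (j + 1)) • s j) * F.coeff i := by
    simp only [W, mpEval_eq_sum F, mpEval_finsetSum, mpEval_C_mul_X_pow, mul_sum, sub_mul,
      sum_sub_distrib, sum_mul, smul_mul_assoc, mul_smul_comm]
  simpa only [hval, smul_mul_assoc, ← smul_sum] using hsum

section Uniqueness

attribute [local instance] Matrix.normedAddCommGroup Matrix.normedSpace

theorem eq_zero_of_eventually_hasSum_inv_pow_smul_eq_mpEval {g : ℕ → Mat p}
    {F : Polynomial (Mat p)}
    (h : ∀ᶠ z in cobounded ℂ, HasSum (fun n => (z ^ (n + 1))⁻¹ • g n) (mpEval F z)) : g = 0 :=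
  eq_zero_of_eventually_hasSum_inv_pow_smul_eq_sum (f := F.coeff) (D := F.natDegree)
    (h.mono fun z hz => by rwa [mpEval_eq_sum] at hz)

end Uniqueness

end MatrixPolynomial

theorem statement8_general (p m k : ℕ)
    (Q P : Polynomial (Mat p)) (hP : P.Monic) (hPdeg : P.natDegree = m)
    (R : ℂ → Mat p) (hR : ∀ z : ℂ, R z = mpEval Q z * (mpEval P z)⁻¹)
    (sneg spos : ℕ → Mat p) (hLaurent : HasLaurentAt R k sneg spos) :
    ∀ n : ℕ, ∑ i ∈ Finset.range (m + 1), spos (n + i) * P.coeff i = 0 := by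
  obtain ⟨c, hc⟩ := hLaurent
  obtain ⟨W, hW⟩ := exists_hasSum_inv_pow_smul_sum_mul_coeff P spos
  set N : Polynomial (Mat p) := ∑ j ∈ range (k + 1), C (sneg j) * X ^ j
  have hseries : ∀ᶠ z in cobounded ℂ,
      HasSum (fun n => (z ^ (n + 1))⁻¹ • ∑ i ∈ range (m + 1), spos (n + i) * P.coeff i)
        (mpEval (Q - N * P - W) z) := by
    filter_upwards [eventually_isUnit_mpEval hP,
      tendsto_norm_cobounded_atTop.eventually_gt_atTop c, eventually_ne_cobounded 0]
      with z hunit hzc hz0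
    have hRP : R z * mpEval P z = mpEval Q z := by
      rw [hR, nonsing_inv_mul_cancel_right _ _ ((isUnit_iff_isUnit_det _).1 hunit)]
    rw [← hPdeg]
    convert hW z hz0 _ (hc z hzc) using 1
    rw [mpEval_sub, mpEval_sub, mpEval_mul, mpEval_finsetSum]
    simp only [mpEval_C_mul_X_pow, sub_mul, hRP]
  exact congr_fun (eq_zero_of_eventually_hasSum_inv_pow_smul_eq_mpEval hseries)

/-- the Laurent coefficients `s_j` (`j ≥ 0`) of `R = Q·P⁻¹` with
`P = ∑_{k=0}^m A_{m−k} z^k` monic satisfy `∑_{i=0}^{m} s_{n+i}·A_{m−i} = 0` for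
every `n ≥ 0` (note `A_{m−i}` is the coefficient of `z^i` in `P`). -/
theorem statement8 (p m k : ℕ) (hp : 1 ≤ p) (hm : 1 ≤ m)
    (Q P : Polynomial (Mat p)) (hP : P.Monic) (hPdeg : P.natDegree = m)
    (R : ℂ → Mat p) (hR : ∀ z : ℂ, R z = mpEval Q z * (mpEval P z)⁻¹)
    (sneg spos : ℕ → Mat p) (hLaurent : HasLaurentAt R k sneg spos) :
    ∀ n : ℕ, ∑ i ∈ Finset.range (m + 1), spos (n + i) * P.coeff i = 0 :=
  statement8_general p m k Q P hP hPdeg R hR sneg spos hLaurent
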